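/- arXiv:0907.0726 — 6 statements merged into one kernel-verified Lean document; each statement's English description precedes it below -/
import Mathlib

section
/- Let k ≥ 1 and T be positive integers with T > (k+1)·log₂ n, and let F : V × V → ℕ be the edge-multiplicity function of an acyclic directed multigraph on a vertex set V of n vertices containing s and t, such that F is the (edge-multiplicity) sum of k·T directed paths from s to t, and every vertex of V lies on at least T − log₂ n of these paths. Then there exist k directed s-t paths, each a sequence of vertices in which every consecutive pair (u,w) satisfies F(u,w) ≥ 1, such that every vertex of V lies on at least one of the k paths and each ordered pair (u,w) is traversed at most k·F(u,w) times in total across all k paths (i.e., each edge of F is used at most k times). (The existence assertion of the paper's Lemma 5.1.) -/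
open Finset

/-- The number of times the ordered pair `(a, b)` occurs as a consecutive pair
of vertices in the walk `p`. -/
def pathEdges {V : Type*} [DecidableEq V] (p : List V) (a b : V) : ℕ :=
  (p.zip p.tail).count (a, b)

/-- The multigraph with edge multiplicities `F` contains a directed cycle all
of whose edges have positive multiplicity. -/
def HasPosCycle {V : Type*} (F : V → V → ℕ) : Prop :=
  ∃ (v : V) (c : List V), List.Chain (fun a b => 1 ≤ F a b) v (c ++ [v])

/-!
Since `F` is acyclic, reachability along its edges is a partial order on the vertices, and every
path of `D` is a chain of it. No path passes through two vertices of an antichain, so an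
antichain of `k + 1` vertices would need `(k + 1) (T - log₂ n) ≤ k T` paths, contradicting
`T > (k + 1) log₂ n`. By Dilworth's theorem the vertices therefore split into `k` chains, and
each chain, lying between `s` and `t`, is threaded by an `s`-`t` path. Acyclicity makes these
paths simple, so each of them uses an edge at most once.
-/

open Relation

section Chains

variable {α : Type*} {e : α → α → Prop} {p q : List α} {u v w x : α}

theorem List.isChain_iff_forall_mem_zip_tail :
    p.IsChain e ↔ ∀ a b, (a, b) ∈ p.zip p.tail → e a b := by
  induction p with
  | nil => simp
  | cons y l ih => cases l with
    | nil => simp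
    | cons z l => simp_all [or_imp, forall_and]

theorem List.IsChain.pairwise_transGen (hp : p.IsChain e) : p.Pairwise (TransGen e) :=
  (hp.imp fun _ _ => TransGen.single).pairwise

theorem List.IsChain.nodup (hirr : ∀ x, ¬ TransGen e x x) (hp : p.IsChain e) : p.Nodup :=
  hp.pairwise_transGen.imp fun {a _} h => by rintro rfl; exact hirr a h

theorem List.IsChain.isChain_reflTransGen (hp : p.IsChain e) :
    _root_.IsChain (ReflTransGen e) {x | x ∈ p} := by
  have : Std.Symm fun x y => ReflTransGen e x y ∨ ReflTransGen e y x := ⟨fun _ _ => Or.symm⟩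
  exact (hp.pairwise_transGen.imp fun h => .inl h.to_reflTransGen).forall

def IsWalk (e : α → α → Prop) (p : List α) (u v : α) : Prop :=
  p.head? = some u ∧ p.getLast? = some v ∧ p.IsChain e

theorem IsWalk.of_reflTransGen (h : ReflTransGen e u v) : ∃ p, IsWalk e p u v := by
  obtain ⟨l, hl, hlast⟩ := List.exists_isChain_cons_of_relationReflTransGen h
  exact ⟨u :: l, rfl, by rw [List.getLast?_eq_some_getLast (List.cons_ne_nil u l), hlast], hl⟩

theorem IsWalk.append (hp : IsWalk e p u v) (hq : IsWalk e q v w) :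
    IsWalk e (p ++ q.tail) u w := by
  obtain ⟨hpu, hpv, hpe⟩ := hp
  obtain ⟨q, rfl⟩ := List.head?_eq_some_iff.1 hq.1
  obtain ⟨p, rfl⟩ := List.getLast?_eq_some_iff.1 hpv
  obtain ⟨-, hqw, hqe⟩ := hq
  refine ⟨by simpa using hpu, ?_, ?_⟩
  · cases q with
    | nil => simpa using hqw
    | cons y q => simpa using hqw
  · rw [List.tail_cons, List.append_assoc, List.singleton_append]
    rw [List.isChain_append] at hpe ⊢
    exact ⟨hpe.1, hqe, by simpa using hpe.2.2⟩

theorem IsWalk.subset_append_tail (hp : IsWalk e p u v) (hq : IsWalk e q v w) :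
    q ⊆ p ++ q.tail := by
  obtain ⟨q, rfl⟩ := List.head?_eq_some_iff.1 hq.1
  obtain ⟨p, rfl⟩ := List.getLast?_eq_some_iff.1 hp.2.1
  intro x
  simp +contextual

theorem IsWalk.reflTransGen_of_mem (hp : IsWalk e p u v) (hx : x ∈ p) :
    ReflTransGen e u x ∧ ReflTransGen e x v := by
  have hpw := hp.2.2.pairwise_transGen
  constructor
  · obtain ⟨p, rfl⟩ := List.head?_eq_some_iff.1 hp.1
    obtain rfl | hx := List.mem_cons.1 hx
    · exact .refl
    · exact (List.rel_of_pairwise_cons hpw hx).to_reflTransGen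
  · obtain ⟨p, rfl⟩ := List.getLast?_eq_some_iff.1 hp.2.1
    obtain hx | hx := List.mem_append.1 hx
    · exact ((List.pairwise_append.1 hpw).2.2 x hx v (List.mem_singleton_self v)).to_reflTransGen
    · rw [List.mem_singleton.1 hx]

theorem exists_isWalk_of_isChain [Preorder α] [DecidableEq α]
    (he : ∀ ⦃x y : α⦄, x ≤ y → ReflTransGen e x y) (C : Finset α)
    (hC : IsChain (· ≤ ·) (C : Set α)) (huv : u ≤ v) (hCuv : ∀ x ∈ C, u ≤ x ∧ x ≤ v) :
    ∃ p, IsWalk e p u v ∧ ∀ x ∈ C, x ∈ p := by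
  induction C using Finset.strongInduction generalizing u with
  | _ C ih =>
  obtain rfl | ⟨m, hm⟩ := C.eq_empty_or_nonempty
  · obtain ⟨p, hp⟩ := IsWalk.of_reflTransGen (he huv)
    exact ⟨p, hp, by simp⟩
  obtain ⟨m, -, hmin⟩ := C.exists_le_minimal hm
  have hle : ∀ x ∈ C, m ≤ x := fun x hx => (hC.total hmin.prop hx).elim id (hmin.2 hx)
  obtain ⟨q, hq, hqC⟩ := ih (C.erase m) (Finset.erase_ssubset hmin.prop)
    (hC.mono (by simp)) (hCuv m hmin.prop).2
    (fun x hx => ⟨hle x (Finset.mem_of_mem_erase hx), (hCuv x (Finset.mem_of_mem_erase hx)).2⟩)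
  obtain ⟨p, hp⟩ := IsWalk.of_reflTransGen (he (hCuv m hmin.prop).1)
  refine ⟨p ++ q.tail, hp.append hq, fun x hx => hp.subset_append_tail hq ?_⟩
  obtain rfl | hxm := eq_or_ne x m
  · exact List.mem_of_mem_head? hq.1
  · exact hqC x (Finset.mem_erase.2 ⟨hxm, hx⟩)

end Chains

section PathEdges
variable {α : Type*} [DecidableEq α] {p : List α} {a b : α}

theorem pathEdges_ne_zero_iff : pathEdges p a b ≠ 0 ↔ (a, b) ∈ p.zip p.tail := by
  rw [pathEdges, ← Nat.pos_iff_ne_zero, List.count_pos_iff]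

theorem isChain_iff_forall_pathEdges_ne_zero {R : α → α → Prop} :
    p.IsChain R ↔ ∀ a b, pathEdges p a b ≠ 0 → R a b := by
  simp only [pathEdges_ne_zero_iff, List.isChain_iff_forall_mem_zip_tail]

theorem pathEdges_le_one (hp : p.Nodup) : pathEdges p a b ≤ 1 := by
  have hzip : (p.zip p.tail).Nodup := by
    refine List.Nodup.of_map Prod.snd ?_
    rw [List.map_snd_zip (by simp)]
    exact hp.sublist (List.tail_sublist p)
  exact List.nodup_iff_count_le_one.1 hzip (a, b)

theorem isChain_of_pathEdges_le {F : α → α → ℕ} (h : ∀ a b, pathEdges p a b ≤ F a b) :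
    p.IsChain fun a b => 1 ≤ F a b :=
  isChain_iff_forall_pathEdges_ne_zero.2 fun a b hab => (Nat.one_le_iff_ne_zero.2 hab).trans (h a b)

theorem pathEdges_le_of_nodup_of_isChain {F : α → α → ℕ} (hp : p.Nodup)
    (hF : p.IsChain fun a b => 1 ≤ F a b) : pathEdges p a b ≤ F a b := by
  by_cases h : pathEdges p a b = 0
  · simp [h]
  · exact (pathEdges_le_one hp).trans (isChain_iff_forall_pathEdges_ne_zero.1 hF a b h)

end PathEdges

theorem not_transGen_self_of_not_hasPosCycle {V : Type*} {F : V → V → ℕ}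
    (hF : ¬ HasPosCycle F) (x : V) : ¬ TransGen (fun a b => 1 ≤ F a b) x x := by
  intro hx
  obtain ⟨y, hxy, hyx⟩ := TransGen.head'_iff.1 hx
  obtain ⟨l, hl, hlast⟩ := List.exists_isChain_cons_of_relationReflTransGen hyx
  have hcycle : (y :: l).dropLast ++ [x] = y :: l := by
    rw [← hlast]
    exact List.dropLast_append_getLast _
  refine hF ⟨x, (y :: l).dropLast, ?_⟩
  show List.IsChain _ (x :: _)
  rw [hcycle]
  exact hl.cons_cons hxy

abbrev reachabilityOrder {α : Type*} (e : α → α → Prop) (he : ∀ x, ¬ TransGen e x x) :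
    PartialOrder α where
  le := ReflTransGen e
  le_refl _ := .refl
  le_trans _ _ _ := .trans
  le_antisymm x y hxy hyx := by
    obtain h | h := reflTransGen_iff_eq_or_transGen.1 hxy
    · exact h.symm
    · exact (he x (h.trans_left hyx)).elim

section Dilworth
variable {α : Type*} [PartialOrder α] {k : ℕ} {S A : Finset α} {c : α → ℕ}

def IsChainColouring (k : ℕ) (S : Finset α) (c : α → ℕ) : Prop :=
  (∀ x ∈ S, c x < k) ∧ ∀ x ∈ S, ∀ y ∈ S, c x = c y → x ≤ y ∨ y ≤ x

namespace IsChainColouring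

theorem mono {T : Finset α} (hc : IsChainColouring k S c) (hTS : T ⊆ S) :
    IsChainColouring k T c :=
  ⟨fun x hx => hc.1 x (hTS hx), fun x hx y hy => hc.2 x (hTS hx) y (hTS hy)⟩

theorem isChain_filter_eq (hc : IsChainColouring k S c) (i : ℕ) :
    IsChain (· ≤ ·) (({x ∈ S | c x = i} : Finset α) : Set α) := fun x hx y hy _ => by
  simp only [coe_filter, Set.mem_ofPred_eq] at hx hy
  exact hc.2 x hx.1 y hy.1 (hx.2.trans hy.2.symm)

theorem injOn_of_isAntichain (hc : IsChainColouring k S c) (hAS : A ⊆ S)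
    (hA : IsAntichain (· ≤ ·) (A : Set α)) : Set.InjOn c A := fun a ha b hb hab =>
  (hc.2 a (hAS ha) b (hAS hb) hab).elim (hA.eq ha hb) (hA.eq' ha hb)

theorem exists_mem_antichain_eq [DecidableEq α] (hc : IsChainColouring k S c) (hAS : A ⊆ S)
    (hA : IsAntichain (· ≤ ·) (A : Set α)) (hcard : #A = k) {x : α} (hx : x ∈ S) :
    ∃ a ∈ A, c a = c x := by
  have himage : A.image c = range k := by
    refine eq_of_subset_of_card_le (fun i hi => ?_) ?_
    · obtain ⟨a, ha, rfl⟩ := mem_image.1 hi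
      exact mem_range.2 (hc.1 a (hAS ha))
    · rw [card_range, card_image_of_injOn (hc.injOn_of_isAntichain hAS hA), hcard]
  have hcx : c x ∈ A.image c := himage ▸ mem_range.2 (hc.1 x hx)
  simpa using hcx

theorem le_of_eq_of_le (hc : IsChainColouring k S c) (hAS : A ⊆ S)
    (hA : IsAntichain (· ≤ ·) (A : Set α)) {a b z : α} (ha : a ∈ A) (hb : b ∈ A) (hz : z ∈ S)
    (hzb : z ≤ b) (hza : c z = c a) : z ≤ a := by
  obtain hza | haz := hc.2 z hz a (hAS ha) hza
  · exact hza
  · obtain rfl := hA.eq ha hb (haz.trans hzb)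
    exact hzb

theorem le_of_eq_of_ge (hc : IsChainColouring k S c) (hAS : A ⊆ S)
    (hA : IsAntichain (· ≤ ·) (A : Set α)) {a b z : α} (ha : a ∈ A) (hb : b ∈ A) (hz : z ∈ S)
    (hbz : b ≤ z) (hza : c z = c a) : a ≤ z := by
  obtain hza | haz := hc.2 z hz a (hAS ha) hza
  · obtain rfl := hA.eq hb ha (hbz.trans hza)
    exact hbz
  · exact haz

/-- A class of `cm` lies below the point of `A` of its colour and a class of `cp` above the point
of `A` of its colour, so a point outside `Sm` can take the `cm`-colour of the point of `A` that
shares its `cp`-colour. -/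
theorem union [DecidableEq α] {Sm Sp : Finset α} {cm cp : α → ℕ}
    (hm : IsChainColouring k Sm cm) (hp : IsChainColouring k Sp cp)
    (hA : IsAntichain (· ≤ ·) (A : Set α)) (hcard : #A = k) (hASm : A ⊆ Sm) (hASp : A ⊆ Sp)
    (hSm : ∀ z ∈ Sm, ∃ a ∈ A, z ≤ a) (hSp : ∀ z ∈ Sp, ∃ a ∈ A, a ≤ z) :
    ∃ c, IsChainColouring k (Sm ∪ Sp) c := by
  have hpick : ∀ z ∈ Sp, ∃ a ∈ A, cp a = cp z ∧ a ≤ z := fun z hz => by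
    obtain ⟨a, ha, haz⟩ := hp.exists_mem_antichain_eq hASp hA hcard hz
    obtain ⟨b, hb, hbz⟩ := hSp z hz
    exact ⟨a, ha, haz, hp.le_of_eq_of_ge hASp hA ha hb hz hbz haz.symm⟩
  choose! pick hpickA hpickc hpickle using hpick
  have hcross : ∀ z ∈ Sm, ∀ w ∈ Sp, cm z = cm (pick w) → z ≤ w := fun z hz w hw hzw =>
    let ⟨_, hb, hzb⟩ := hSm z hz
    (hm.le_of_eq_of_le hASm hA (hpickA w hw) hb hz hzb hzw).trans (hpickle w hw)
  have hSp_of_not_mem {z : α} (hz : z ∈ Sm ∪ Sp) (hzm : z ∉ Sm) : z ∈ Sp :=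
    (mem_union.1 hz).resolve_left hzm
  refine ⟨fun z => if z ∈ Sm then cm z else cm (pick z), fun z hz => ?_,
    fun z hz w hw hzw => ?_⟩
  · beta_reduce
    split_ifs with hzm
    · exact hm.1 z hzm
    · exact hm.1 _ (hASm (hpickA z (hSp_of_not_mem hz hzm)))
  · beta_reduce at hzw
    split_ifs at hzw with hzm hwm hwm
    · exact hm.2 z hzm w hwm hzw
    · exact .inl (hcross z hzm w (hSp_of_not_mem hw hwm) hzw)
    · exact .inr (hcross w hwm z (hSp_of_not_mem hz hzm) hzw.symm)
    · have hzp := hSp_of_not_mem hz hzm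
      have hwp := hSp_of_not_mem hw hwm
      have hpick_eq : pick z = pick w :=
        hm.injOn_of_isAntichain hASm hA (hpickA z hzp) (hpickA w hwp) hzw
      exact hp.2 z hzp w hwp (by rw [← hpickc z hzp, hpick_eq, hpickc w hwp])

theorem insert_isChain [DecidableEq α] {C : Finset α} (hc : IsChainColouring k (S \ C) c)
    (hC : IsChain (· ≤ ·) (C : Set α)) :
    IsChainColouring (k + 1) S fun z => if z ∈ C then k else c z := by
  refine ⟨fun z hz => ?_, fun z hz w hw hzw => ?_⟩
  · beta_reduce
    split_ifs with hzC
    · exact k.lt_succ_self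
    · exact (hc.1 z (mem_sdiff.2 ⟨hz, hzC⟩)).trans k.lt_succ_self
  · beta_reduce at hzw
    split_ifs at hzw with hzC hwC hwC
    · exact hC.total hzC hwC
    · exact absurd hzw.symm (hc.1 w (mem_sdiff.2 ⟨hw, hwC⟩)).ne
    · exact absurd hzw (hc.1 z (mem_sdiff.2 ⟨hz, hzC⟩)).ne
    · exact hc.2 z (mem_sdiff.2 ⟨hz, hzC⟩) w (mem_sdiff.2 ⟨hw, hwC⟩) hzw

end IsChainColouring

/-- Perles' step: since `A` is a maximum antichain, its down-set and its up-set in `S` cover `S`,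
and they are proper subsets, missing `y` and `x` respectively. -/
theorem exists_isChainColouring_of_isAntichain_card_eq [DecidableEq α]
    (hS : ∀ B ⊆ S, IsAntichain (· ≤ ·) (B : Set α) → #B ≤ k)
    (ih : ∀ T ⊂ S, ∃ c, IsChainColouring k T c)
    (hAS : A ⊆ S) (hA : IsAntichain (· ≤ ·) (A : Set α)) (hcard : #A = k)
    {x y : α} (hx : Minimal (· ∈ S) x) (hy : Maximal (· ∈ S) y) (hxA : x ∉ A) (hyA : y ∉ A) :
    ∃ c, IsChainColouring k S c := by
  classical
  set Sm := {z ∈ S | ∃ a ∈ A, z ≤ a}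
  set Sp := {z ∈ S | ∃ a ∈ A, a ≤ z}
  have hcover : S ⊆ Sm ∪ Sp := by
    intro z hz
    by_contra hzA
    simp only [Sm, Sp, mem_union, mem_filter, hz, true_and, not_or, not_exists, not_and] at hzA
    have hins : IsAntichain (· ≤ ·) ((insert z A : Finset α) : Set α) := by
      rw [coe_insert]
      exact hA.insert (fun b hb _ hbz => hzA.2 b hb hbz) (fun b hb _ hzb => hzA.1 b hb hzb)
    have hcard' := hS _ (insert_subset hz hAS) hins
    rw [card_insert_of_notMem fun h => hzA.1 z h le_rfl, hcard] at hcard'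
    omega
  have hSm : Sm ⊂ S := filter_ssubset.2
    ⟨y, hy.prop, fun ⟨a, ha, hya⟩ => hyA (hy.eq_of_le (hAS ha) hya ▸ ha)⟩
  have hSp : Sp ⊂ S := filter_ssubset.2
    ⟨x, hx.prop, fun ⟨a, ha, hax⟩ => hxA (hx.eq_of_ge (hAS ha) hax ▸ ha)⟩
  obtain ⟨cm, hcm⟩ := ih Sm hSm
  obtain ⟨cp, hcp⟩ := ih Sp hSp
  obtain ⟨c, hc⟩ := hcm.union hcp hA hcard (fun a ha => mem_filter.2 ⟨hAS ha, a, ha, le_rfl⟩)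
    (fun a ha => mem_filter.2 ⟨hAS ha, a, ha, le_rfl⟩) (fun z hz => (mem_filter.1 hz).2)
    (fun z hz => (mem_filter.1 hz).2)
  exact ⟨c, hc.mono hcover⟩

/-- **Dilworth's theorem** -/
theorem exists_isChainColouring [DecidableEq α] (k : ℕ) (S : Finset α)
    (hS : ∀ A ⊆ S, IsAntichain (· ≤ ·) (A : Set α) → #A ≤ k) :
    ∃ c, IsChainColouring k S c := by
  induction S using Finset.strongInduction generalizing k with
  | _ S ih =>
  obtain rfl | hne := S.eq_empty_or_nonempty
  · exact ⟨0, by simp [IsChainColouring]⟩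
  obtain ⟨y, hy⟩ := S.exists_maximal hne
  obtain ⟨x, hxy, hx⟩ := S.exists_le_minimal hy.prop
  by_cases hA : ∃ A ⊆ S \ {x, y}, IsAntichain (· ≤ ·) (A : Set α) ∧ #A = k
  · obtain ⟨A, hAS, hA, hcard⟩ := hA
    have hxyA : x ∉ A ∧ y ∉ A := by
      constructor <;> intro h <;> simpa using (mem_sdiff.1 (hAS h)).2
    exact exists_isChainColouring_of_isAntichain_card_eq hS (fun T hT => ih T hT k
      fun B hB => hS B (hB.trans hT.subset)) (hAS.trans sdiff_subset) hA hcard hx hy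
      hxyA.1 hxyA.2
  · push Not at hA
    obtain ⟨m, rfl⟩ : ∃ m, k = m + 1 := Nat.exists_eq_add_one.2
      (hS {x} (by simpa using hx.prop) (by simp))
    have hxyS : {x, y} ⊆ S := by simp [insert_subset_iff, hx.prop, hy.prop]
    obtain ⟨c, hc⟩ := ih (S \ {x, y}) (sdiff_ssubset hxyS (by simp)) m fun B hB hBA =>
      Nat.le_of_lt_succ ((hS B (hB.trans sdiff_subset) hBA).lt_of_ne (hA B hB hBA))
    exact ⟨_, hc.insert_isChain (by simpa using IsChain.pair hxy)⟩

end Dilworth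

theorem IsAntichain.sum_card_filter_mem_le {α ι : Type*} [DecidableEq α] [Fintype ι]
    {r : α → α → Prop} {A : Finset α} (hA : IsAntichain r (A : Set α)) (D : ι → List α)
    (hD : ∀ i, IsChain r {x | x ∈ D i}) : ∑ a ∈ A, #{i | a ∈ D i} ≤ Fintype.card ι := by
  classical
  rw [← card_biUnion]
  · exact card_le_univ _
  · intro a ha b hb hab
    simp only [Function.onFun, disjoint_left, mem_filter, mem_univ, true_and]
    intro i hai hbi
    exact (hD i hai hbi hab).elim (hA ha hb hab) (hA hb ha hab.symm)

theorem IsAntichain.card_le_of_le_card_filter_mem {α ι : Type*} [DecidableEq α] [Fintype ι]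
    {r : α → α → Prop} {A : Finset α} (hA : IsAntichain r (A : Set α)) (D : ι → List α)
    (hD : ∀ i, IsChain r {x | x ∈ D i}) {k : ℕ} {T L : ℝ} (hι : Fintype.card ι ≤ k * T)
    (hL : 0 ≤ L) (hT : (k + 1) * L < T) (hcover : ∀ a ∈ A, T - L ≤ #{i | a ∈ D i}) :
    #A ≤ k := by
  have hsum : #A * (T - L) ≤ k * T := calc
    #A * (T - L) ≤ ∑ a ∈ A, (#{i | a ∈ D i} : ℝ) := by
      simpa using card_nsmul_le_sum _ _ _ hcover
    _ ≤ Fintype.card ι := by exact_mod_cast hA.sum_card_filter_mem_le D hD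
    _ ≤ k * T := hι
  by_contra! hk
  have hk' : (k : ℝ) + 1 ≤ #A := by exact_mod_cast hk
  have hTL : 0 ≤ T - L := by nlinarith
  nlinarith [mul_le_mul_of_nonneg_right hk' hTL]

theorem k_paths_in_acyclic_flow_general {V : Type*} [Fintype V] [DecidableEq V]
    (s t : V)
    (k T : ℕ)
    (hTbig : ((k : ℝ) + 1) * Real.logb 2 (Fintype.card V) < (T : ℝ))
    (F : V → V → ℕ) (hacyc : ¬ HasPosCycle F)
    (D : Fin (k * T) → List V)
    (hends : ∀ i, (D i).head? = some s ∧ (D i).getLast? = some t)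
    (hdecomp : ∀ a b, ∑ i, pathEdges (D i) a b = F a b)
    (hcover : ∀ v : V,
      (T : ℝ) - Real.logb 2 (Fintype.card V) ≤
        (({i | v ∈ D i} : Finset (Fin (k * T))).card : ℝ)) :
    ∃ P : Fin k → List V,
      (∀ i, (P i).head? = some s ∧ (P i).getLast? = some t ∧
        (P i).Chain' (fun a b => 1 ≤ F a b)) ∧
      (∀ v : V, ∃ i, v ∈ P i) ∧
      (∀ a b, ∑ i, pathEdges (P i) a b ≤ k * F a b) := by
  set L := Real.logb 2 (Fintype.card V)
  have hirr := not_transGen_self_of_not_hasPosCycle hacyc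
  let _ : PartialOrder V := reachabilityOrder _ hirr
  have hD (i : Fin (k * T)) : IsWalk (fun a b => 1 ≤ F a b) (D i) s t :=
    ⟨(hends i).1, (hends i).2, isChain_of_pathEdges_le fun a b =>
      hdecomp a b ▸ single_le_sum (fun j _ => Nat.zero_le (pathEdges (D j) a b)) (mem_univ i)⟩
  have hL : 0 ≤ L := div_nonneg (Real.log_natCast_nonneg _) (Real.log_nonneg one_le_two)
  have hon (v : V) : ∃ i, v ∈ D i := by
    by_contra! h
    have := hcover v
    simp [h] at this
    nlinarith
  obtain ⟨c, hc⟩ := exists_isChainColouring k univ fun A _ hA =>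
    hA.card_le_of_le_card_filter_mem D (fun i => (hD i).2.2.isChain_reflTransGen) (by simp) hL
      hTbig fun a _ => hcover a
  have hP (i : Fin k) : ∃ p, IsWalk (fun a b => 1 ≤ F a b) p s t ∧
      ∀ v ∈ ({v | c v = i} : Finset V), v ∈ p := by
    obtain ⟨j, hs⟩ := hon s
    exact exists_isWalk_of_isChain (fun _ _ h => h) _ (hc.isChain_filter_eq i)
      ((hD j).reflTransGen_of_mem hs).2 fun v _ =>
        have ⟨j, hv⟩ := hon v
        (hD j).reflTransGen_of_mem hv
  choose P hP hPc using hP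
  refine ⟨P, hP, fun v => ⟨⟨c v, hc.1 v (mem_univ v)⟩, hPc _ v (by simp)⟩, fun a b => ?_⟩
  calc ∑ i, pathEdges (P i) a b ≤ ∑ _i : Fin k, F a b := sum_le_sum fun i _ =>
        pathEdges_le_of_nodup_of_isChain ((hP i).2.2.nodup hirr) (hP i).2.2
    _ = k * F a b := by simp

/-- Existence assertion of the paper's Lemma 5.1: if the acyclic multigraph
`F` is a sum of `k·T` directed `s`-`t` paths with every vertex lying on at
least `T − log₂ n` of them, and `T > (k+1)·log₂ n`, then there are `k`
directed `s`-`t` paths in `F` covering all vertices and using each edge of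
`F` at most `k` times. -/
theorem k_paths_in_acyclic_flow {V : Type*} [Fintype V] [DecidableEq V]
    (s t : V) (hst : s ≠ t) (hn : 2 ≤ Fintype.card V)
    (k T : ℕ) (hk : 1 ≤ k)
    (hTbig : ((k : ℝ) + 1) * Real.logb 2 (Fintype.card V) < (T : ℝ))
    (F : V → V → ℕ) (hacyc : ¬ HasPosCycle F)
    (D : Fin (k * T) → List V)
    (hends : ∀ i, (D i).head? = some s ∧ (D i).getLast? = some t)
    (hdecomp : ∀ a b, ∑ i, pathEdges (D i) a b = F a b)
    (hcover : ∀ v : V,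
      (T : ℝ) - Real.logb 2 (Fintype.card V) ≤
        (({i | v ∈ D i} : Finset (Fin (k * T))).card : ℝ)) :
    ∃ P : Fin k → List V,
      (∀ i, (P i).head? = some s ∧ (P i).getLast? = some t ∧
        (P i).Chain' (fun a b => 1 ≤ F a b)) ∧
      (∀ v : V, ∃ i, v ∈ P i) ∧
      (∀ a b, ∑ i, pathEdges (P i) a b ≤ k * F a b) :=
  k_paths_in_acyclic_flow_general s t k T hTbig F hacyc D hends hdecomp hcover
end

section
/- Let (ℓ, x, x₃, f) be a feasible solution to the latency LP with value L = Σ_{v ≠ s} ℓ(v). Then there exists ℓ′ : V → ℝ such that (ℓ′, x, x₃, f) is also a feasible solution to the latency LP, its value Σ_{v ≠ s} ℓ′(v) is at most (1 + 1/n)·L, and ℓ′(u) ≤ n²·ℓ′(v) for all u, v ∈ V ∖ {s}; in particular the ratio of the largest to the smallest latency is at most n². (Paper's Lemma 6.1.) -/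
open Finset

/-- `d` is an asymmetric metric: nonnegative, zero on the diagonal, and
satisfying the directed triangle inequality. -/
def IsAsymMetric {V : Type*} (d : V → V → ℝ) : Prop :=
  (∀ u w, 0 ≤ d u w) ∧ (∀ u, d u u = 0) ∧ (∀ u v w, d u w ≤ d u v + d v w)

/-- `(ℓ, x, x₃, f)` is a feasible solution to the latency LP.  Here `x₃ u w v`
is the ordering variable for the ordered triple `(u, w, v)` and `f v u w` is
the amount of `v`-flow on the edge `(u, w)`. -/
structure LatencyLPFeasible {V : Type*} [Fintype V] [DecidableEq V]
    (s t : V) (d : V → V → ℝ) (ℓ : V → ℝ) (x : V → V → ℝ)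
    (x₃ : V → V → V → ℝ) (f : V → V → V → ℝ) : Prop where
  x_nonneg : ∀ u w, 0 ≤ x u w
  x₃_nonneg : ∀ u w v, u ≠ w → w ≠ v → u ≠ v → 0 ≤ x₃ u w v
  f_nonneg : ∀ v, v ≠ s → ∀ u w, 0 ≤ f v u w
  ell_ge_flow : ∀ v, v ≠ s → (∑ u, ∑ w, d u w * f v u w) ≤ ℓ v
  ell_ge_triple : ∀ u w v, u ≠ w → w ≠ v → u ≠ v →
    (d s u + d u w + d w v) * x₃ u w v ≤ ℓ v
  ell_t_max : ∀ v, ℓ v ≤ ℓ t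
  x_decomp : ∀ u v w, u ≠ v → v ≠ w → u ≠ w →
    x u w = x₃ v u w + x₃ u v w + x₃ u w v
  x_antisym : ∀ u w, u ≠ w → x u w + x w u = 1
  x_s_first : ∀ u, u ≠ s → u ≠ t → x s u = 1
  x_t_last : ∀ u, u ≠ s → u ≠ t → x u t = 1
  f_conserve : ∀ v, v ≠ s → ∀ u, u ≠ s → u ≠ v → ∑ w, f v w u = ∑ w, f v u w
  f_source : ∀ v, v ≠ s → ∑ w, f v s w = 1
  f_sink : ∀ v, v ≠ s → ∑ w, f v w v = 1
  f_no_into_s : ∀ v, v ≠ s → ∀ u, f v u s = 0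
  f_no_out_of_v : ∀ v, v ≠ s → ∀ u, f v v u = 0
  f_eq_x : ∀ v, v ≠ s → ∀ u, u ≠ v → ∑ w, f v u w = x u v
  f_le_univ : ∀ v, v ≠ s → ∀ u w, f v u w ≤ f t u w
  f_cut : ∀ v, v ≠ s → ∀ S : Finset V, s ∉ S → ∀ y ∈ S,
    x y v ≤ ∑ w ∈ S, ∑ u ∈ Sᶜ, f v u w

/-- Paper's Lemma 6.1: any feasible solution to the latency LP can be modified,
increasing its value by at most a factor `1 + 1/n`, so that the ratio of the
largest to the smallest latency is at most `n²`. -/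
theorem latency_scaling {V : Type*} [Fintype V] [DecidableEq V]
    (s t : V) (hst : s ≠ t) (hn : 2 ≤ Fintype.card V)
    (d : V → V → ℝ) (hd : IsAsymMetric d)
    (ℓ : V → ℝ) (x : V → V → ℝ) (x₃ : V → V → V → ℝ) (f : V → V → V → ℝ)
    (hfeas : LatencyLPFeasible s t d ℓ x x₃ f)
    (L : ℝ) (hL : L = ∑ v ∈ Finset.univ.erase s, ℓ v) :
    ∃ ℓ' : V → ℝ, LatencyLPFeasible s t d ℓ' x x₃ f ∧
      (∑ v ∈ Finset.univ.erase s, ℓ' v) ≤ (1 + 1 / (Fintype.card V : ℝ)) * L ∧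
      ∀ u v : V, u ≠ s → v ≠ s → ℓ' u ≤ (Fintype.card V : ℝ) ^ 2 * ℓ' v := by
  set n : ℝ := (Fintype.card V : ℝ) with hn'
  have hnpos : (0:ℝ) < n := by
    rw [hn']; exact_mod_cast (by omega : 0 < Fintype.card V)
  have hn2 : (2:ℝ) ≤ n := by rw [hn']; exact_mod_cast hn
  have hell_nonneg : ∀ v : V, v ≠ s → 0 ≤ ℓ v := by
    intro v hv
    refine le_trans ?_ (hfeas.ell_ge_flow v hv)
    refine Finset.sum_nonneg fun u _ => Finset.sum_nonneg fun w _ => ?_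
    exact mul_nonneg (hd.1 u w) (hfeas.f_nonneg v hv u w)
  have hts : t ≠ s := hst.symm
  have hlt0 : 0 ≤ ℓ t := hell_nonneg t hts
  set c : ℝ := ℓ t / n ^ 2 with hc
  have hc0 : 0 ≤ c := div_nonneg hlt0 (by positivity)
  have hceq : n ^ 2 * c = ℓ t := by rw [hc]; field_simp
  have hclet : c ≤ ℓ t := by
    rw [hc, div_le_iff₀ (by positivity)]
    nlinarith [mul_nonneg hlt0 (by nlinarith : (0:ℝ) ≤ n ^ 2 - 1)]
  refine ⟨fun v => max (ℓ v) c, ?_, ?_, ?_⟩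
  · exact { hfeas with
      ell_ge_flow := fun v hv => le_trans (hfeas.ell_ge_flow v hv) (le_max_left _ _)
      ell_ge_triple := fun u w v h1 h2 h3 =>
        le_trans (hfeas.ell_ge_triple u w v h1 h2 h3) (le_max_left _ _)
      ell_t_max := fun v => max_le_max (hfeas.ell_t_max v) le_rfl }
  · have hltL : ℓ t ≤ L := by
      rw [hL]
      refine Finset.single_le_sum (fun v hv => hell_nonneg v (Finset.ne_of_mem_erase hv)) ?_
      simp [hts]
    have hsum : (∑ v ∈ Finset.univ.erase s, max (ℓ v) c)
        ≤ L + ((Finset.univ.erase s).card : ℝ) * c := by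
      have h := Finset.sum_le_sum (s := Finset.univ.erase s)
        (f := fun v => max (ℓ v) c) (g := fun v => ℓ v + c) (fun v hv => by
          have := hell_nonneg v (Finset.ne_of_mem_erase hv)
          exact max_le (by linarith) (by linarith))
      simpa [Finset.sum_add_distrib, Finset.sum_const, nsmul_eq_mul, hL] using h
    have hcard : ((Finset.univ.erase s).card : ℝ) ≤ n := by
      rw [hn']
      exact_mod_cast (Finset.card_le_card (Finset.subset_univ _)).trans
        (by simp [Finset.card_univ])
    have hstep : ((Finset.univ.erase s).card : ℝ) * c ≤ (1 / n) * L := by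
      have key : n * c = ℓ t / n := by rw [hc]; field_simp
      calc ((Finset.univ.erase s).card : ℝ) * c ≤ n * c :=
            mul_le_mul_of_nonneg_right hcard hc0
        _ = ℓ t / n := key
        _ ≤ L / n := by gcongr
        _ = (1 / n) * L := by ring
    calc (∑ v ∈ Finset.univ.erase s, max (ℓ v) c)
        ≤ L + ((Finset.univ.erase s).card : ℝ) * c := hsum
      _ ≤ L + (1 / n) * L := by linarith
      _ = (1 + 1 / n) * L := by ring
  · intro u v hu hv
    calc max (ℓ u) c ≤ ℓ t := max_le (hfeas.ell_t_max u) hclet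
      _ = n ^ 2 * c := hceq.symm
      _ ≤ n ^ 2 * max (ℓ v) c := by
          have := le_max_right (ℓ v) c
          nlinarith [sq_nonneg n]
end

section
/- Let (ℓ, x, x₃, f) be a feasible solution to the latency LP, let u, w, v ∈ V be pairwise distinct, and let ε > 0. If x(u,w) + x(w,v) ≥ 1 + ε, then ℓ(v) ≥ ε·d(u,w). (Paper's Lemma 6.4.) -/
open Finset

/-- Paper's Lemma 6.4: if `x(u,w) + x(w,v) ≥ 1 + ε` then `ℓ(v) ≥ ε·d(u,w)`. -/
theorem latency_ordering_lemma {V : Type*} [Fintype V] [DecidableEq V]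
    (s t : V) (hst : s ≠ t) (hn : 2 ≤ Fintype.card V)
    (d : V → V → ℝ) (hd : IsAsymMetric d)
    (ℓ : V → ℝ) (x : V → V → ℝ) (x₃ : V → V → V → ℝ) (f : V → V → V → ℝ)
    (hfeas : LatencyLPFeasible s t d ℓ x x₃ f)
    (u w v : V) (huw : u ≠ w) (hwv : w ≠ v) (huv : u ≠ v)
    (ε : ℝ) (hε : 0 < ε)
    (h : 1 + ε ≤ x u w + x w v) :
    ε * d u w ≤ ℓ v := by
  obtain ⟨hd0, hdd, hdt⟩ := hd
  have e1 := hfeas.x_decomp u v w huv hwv.symm huw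
  have e2 := hfeas.x_decomp w u v huw.symm huv hwv
  have e3 := hfeas.x_decomp u w v huw hwv huv
  have e4 := hfeas.x_decomp v w u hwv.symm huw.symm huv.symm
  have e5 := hfeas.x_antisym u v huv
  have hnn : 0 ≤ x₃ v w u := hfeas.x₃_nonneg v w u hwv.symm huw.symm huv.symm
  have heps : ε ≤ x₃ u w v := by linarith
  have htrip := hfeas.ell_ge_triple u w v huw hwv huv
  have h2 : ε * d u w ≤ x₃ u w v * d u w :=
    mul_le_mul_of_nonneg_right heps (hd0 u w)
  have h3 : d u w * x₃ u w v ≤ (d s u + d u w + d w v) * x₃ u w v := by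
    apply mul_le_mul_of_nonneg_right _ (le_trans hε.le heps)
    have := hd0 s u; have := hd0 w v; linarith
  nlinarith [h2, h3, htrip]
end

section
/- For every real D > 0 there exist a finite set V of n = 6 vertices with distinct s, t ∈ V, an asymmetric metric d on V, and a feasible solution x to LP(α) with α = 1/2 whose cost Σ_{u,w} d(u,w)·x(u,w) is at most 5, such that every Hamiltonian s-t path has cost at least D. Consequently, as a relaxation of the asymmetric traveling salesman path problem, LP(1/2) has unbounded integrality gap. (The paper's bad-gap example at the start of Section 4.) -/
open Finset

/-- The cost of a path, given as a list of vertices: the sum of `d` over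
consecutive pairs. -/
def pathCost {V : Type*} (d : V → V → ℝ) : List V → ℝ
  | u :: w :: rest => d u w + pathCost d (w :: rest)
  | _ => 0

/-- `x` is a feasible solution to LP(α) on the vertex set `V` with source `s`
and sink `t`. -/
def LPFeasible {V : Type*} [Fintype V] [DecidableEq V] (s t : V) (α : ℝ)
    (x : V → V → ℝ) : Prop :=
  (∀ u w, 0 ≤ x u w) ∧
  (∀ v, v ≠ s → v ≠ t → ∑ u, x u v = ∑ u, x v u) ∧
  (∑ u, x s u = 1) ∧ (∑ u, x u t = 1) ∧
  (∑ u, x u s = 0) ∧ (∑ u, x t u = 0) ∧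
  (∀ S : Finset V, S.Nonempty → s ∉ S → α ≤ ∑ w ∈ S, ∑ u ∈ Sᶜ, x u w)

/-- `p` is a Hamiltonian `s`-`t` path: it lists every vertex exactly once,
starting at `s` and ending at `t`. -/
def IsHamPath {V : Type*} [Fintype V] (s t : V) (p : List V) : Prop :=
  p.Nodup ∧ (∀ v : V, v ∈ p) ∧ p.head? = some s ∧ p.getLast? = some t

/-!
The LP solution sends flow `1/2` along each of the two internally disjoint paths
`0 → 1 → 2 → 5` and `0 → 3 → 4 → 5`; every vertex other than `0` is reached by one of them, so
every cut into a set avoiding `0` carries at least `1/2`. Charge `1` for moving to a vertex reachable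
along these arcs and `M` for any other move: since reachability is transitive this is an asymmetric
metric, and the LP cost is `6 · 1/2 = 3`. A Hamiltonian path must visit both branches, so at some
step it leaves one branch for the other, which is a move against reachability and costs `M`.
-/

section CapMetric

variable {V : Type*} [DecidableEq V] (R : V → V → Prop) [DecidableRel R]

def capMetric (M : ℝ) (u w : V) : ℝ :=
  if u = w then 0 else if R u w then 1 else M

variable {R}

theorem isAsymMetric_capMetric [IsTrans V R] {M : ℝ} (hM : 1 ≤ M) :
    IsAsymMetric (capMetric R M) := by
  refine ⟨fun u w => ?_, fun u => if_pos rfl, fun u v w => ?_⟩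
  · unfold capMetric; split_ifs <;> linarith
  · unfold capMetric
    split_ifs <;> subst_vars <;>
      first | linarith | contradiction | exact absurd (_root_.trans ‹R u v› ‹R v w›) ‹_›

theorem le_capMetric {M : ℝ} {u w : V} (h : ¬(u = w ∨ R u w)) : M ≤ capMetric R M u w := by
  push Not at h
  simp [capMetric, h.1, h.2]

end CapMetric

theorem pathCost_nonneg {V : Type*} {d : V → V → ℝ} (hd : ∀ u w, 0 ≤ d u w) :
    ∀ p : List V, 0 ≤ pathCost d p
  | [] | [_] => le_rfl
  | u :: w :: rest => add_nonneg (hd u w) (pathCost_nonneg hd (w :: rest))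

theorem le_pathCost_of_not_isChain {V : Type*} {d : V → V → ℝ} {C : V → V → Prop} {M : ℝ}
    (hd : ∀ u w, 0 ≤ d u w) (hC : ∀ u w, ¬C u w → M ≤ d u w) :
    ∀ p : List V, ¬p.IsChain C → M ≤ pathCost d p
  | [], h | [_], h => absurd (by simp) h
  | u :: w :: rest, h => by
    rw [List.isChain_cons_cons, not_and_or] at h
    rw [pathCost]
    rcases h with h | h
    · linarith [hC u w h, pathCost_nonneg hd (w :: rest)]
    · linarith [hd u w, le_pathCost_of_not_isChain hd hC (w :: rest) h]

theorem le_sum_cut {V : Type*} [Fintype V] [DecidableEq V] {x : V → V → ℝ}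
    (hx : ∀ u w, 0 ≤ x u w) {S : Finset V} {u w : V} (hu : u ∉ S) (hw : w ∈ S) :
    x u w ≤ ∑ w ∈ S, ∑ u ∈ Sᶜ, x u w :=
  calc x u w ≤ ∑ u ∈ Sᶜ, x u w :=
        single_le_sum (fun v _ => hx v w) (mem_compl.mpr hu)
    _ ≤ ∑ w ∈ S, ∑ u ∈ Sᶜ, x u w :=
        single_le_sum (fun v _ => sum_nonneg fun v' _ => hx v' v) hw

theorem IsHamPath.length_eq_card {V : Type*} [Fintype V] {s t : V} {p : List V}
    (h : IsHamPath s t p) : p.length = Fintype.card V := by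
  classical
  rw [← List.toFinset_card_of_nodup h.1,
    Finset.eq_univ_of_forall (s := p.toFinset) (by simpa using h.2.1)]
  rfl

def gapArc (u w : Fin 6) : Prop :=
  u = 0 ∧ w = 1 ∨ u = 1 ∧ w = 2 ∨ u = 2 ∧ w = 5 ∨ u = 0 ∧ w = 3 ∨ u = 3 ∧ w = 4 ∨ u = 4 ∧ w = 5

/-- The transitive closure of `gapArc`. -/
def gapReach (u w : Fin 6) : Prop :=
  u = 0 ∧ w ≠ 0 ∨ u ≠ 5 ∧ w = 5 ∨ u = 1 ∧ w = 2 ∨ u = 3 ∧ w = 4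

instance : DecidableRel gapArc := fun _ _ => by unfold gapArc; infer_instance

instance : DecidableRel gapReach := fun _ _ => by unfold gapReach; infer_instance

instance : IsTrans (Fin 6) gapReach := ⟨by decide⟩

noncomputable def gapFlow (u w : Fin 6) : ℝ := if gapArc u w then 1 / 2 else 0

theorem exists_gapArc_into : ∀ S : Finset (Fin 6), S.Nonempty → 0 ∉ S →
    ∃ u ∉ S, ∃ w ∈ S, gapArc u w := by
  decide

theorem lpFeasible_gapFlow : LPFeasible 0 5 (1 / 2) gapFlow := by
  have hx : ∀ u w, 0 ≤ gapFlow u w := fun u w => by unfold gapFlow; split_ifs <;> norm_num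
  have hcut (S : Finset (Fin 6)) (hS : S.Nonempty) (h0 : 0 ∉ S) :
      1 / 2 ≤ ∑ w ∈ S, ∑ u ∈ Sᶜ, gapFlow u w := by
    obtain ⟨u, hu, w, hw, huw⟩ := exists_gapArc_into S hS h0
    exact (if_pos huw).ge.trans (le_sum_cut hx hu hw)
  refine ⟨hx, fun v h0 h5 => ?_, ?_, ?_, ?_, ?_, hcut⟩
  · fin_cases v <;> simp_all [gapFlow, gapArc]
  all_goals norm_num +decide [gapFlow, gapArc, Fin.sum_univ_six]

theorem cost_gapFlow (M : ℝ) : ∑ u, ∑ w, capMetric gapReach M u w * gapFlow u w = 3 := by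
  norm_num +decide [capMetric, gapReach, gapFlow, gapArc, Fin.sum_univ_six]

theorem eq_of_isHamPath_zero_five {p : List (Fin 6)} (h : IsHamPath 0 5 p) :
    ∃ a b c e, p = [0, a, b, c, e, 5] := by
  match p, h.length_eq_card, h.2.2 with
  | [_, a, b, c, e, _], _, ⟨h0, h5⟩ =>
    simp only [List.head?_cons, List.getLast?_cons_cons, Option.some.injEq] at h0 h5
    exact ⟨a, b, c, e, by simp_all⟩

theorem not_isChain_gapReach : ∀ a b c e : Fin 6, [0, a, b, c, e, 5].Nodup →
    ¬[0, a, b, c, e, 5].IsChain (fun u w => u = w ∨ gapReach u w) := by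
  decide

theorem le_pathCost_of_isHamPath {M : ℝ} (hM : 1 ≤ M) {p : List (Fin 6)} (h : IsHamPath 0 5 p) :
    M ≤ pathCost (capMetric gapReach M) p := by
  obtain ⟨a, b, c, e, rfl⟩ := eq_of_isHamPath_zero_five h
  exact le_pathCost_of_not_isChain (isAsymMetric_capMetric hM).1 (fun _ _ => le_capMetric) _
    (not_isChain_gapReach a b c e h.1)

theorem lp_half_unbounded_gap_general (D : ℝ) :
    ∃ (s t : Fin 6), s ≠ t ∧
      ∃ (d : Fin 6 → Fin 6 → ℝ) (x : Fin 6 → Fin 6 → ℝ),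
        IsAsymMetric d ∧
        LPFeasible s t (1 / 2) x ∧
        (∑ u, ∑ w, d u w * x u w) ≤ 5 ∧
        ∀ p : List (Fin 6), IsHamPath s t p → D ≤ pathCost d p := by
  have hM : 1 ≤ max D 1 := le_max_right D 1
  refine ⟨0, 5, by decide, capMetric gapReach (max D 1), gapFlow, isAsymMetric_capMetric hM,
    lpFeasible_gapFlow, by rw [cost_gapFlow]; norm_num, fun p hp => ?_⟩
  exact (le_max_left D 1).trans (le_pathCost_of_isHamPath hM hp)

/-- Paper's bad-gap example (Section 4): as a relaxation of ATSPP, LP(1/2)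
has unbounded integrality gap; for every `D > 0` there is an instance on 6
vertices with a feasible LP(1/2) solution of cost at most 5 in which every
Hamiltonian `s`-`t` path costs at least `D`. -/
theorem lp_half_unbounded_gap (D : ℝ) (hD : 0 < D) :
    ∃ (s t : Fin 6), s ≠ t ∧
      ∃ (d : Fin 6 → Fin 6 → ℝ) (x : Fin 6 → Fin 6 → ℝ),
        IsAsymMetric d ∧
        LPFeasible s t (1 / 2) x ∧
        (∑ u, ∑ w, d u w * x u w) ≤ 5 ∧
        ∀ p : List (Fin 6), IsHamPath s t p → D ≤ pathCost d p :=
  lp_half_unbounded_gap_general D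
end

section
/- Let F̄, F′ : V × V → ℕ be edge-multiplicity functions of directed multigraphs on a finite vertex set V such that F̄ is acyclic and every vertex has in-degree at most 1 and out-degree at most 1 in F′. Let A : V × V → ℕ satisfy A(u,w) ≤ F̄(u,w) + F′(u,w) for all u, w, suppose every vertex with positive degree in A has its in-degree equal to its out-degree in A, and suppose at least two distinct vertices have positive degree in A. Then there exist two distinct vertices x and y each having in-degree exactly 1 in A. (The combinatorial content of the paper's Claim 2.4.) -/
open Finset

/-- The in-degree of `v` in the multigraph with edge multiplicities `m`. -/
def inDeg {V : Type*} [Fintype V] (m : V → V → ℕ) (v : V) : ℕ := ∑ u, m u v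

/-- The out-degree of `v` in the multigraph with edge multiplicities `m`. -/
def outDeg {V : Type*} [Fintype V] (m : V → V → ℕ) (v : V) : ℕ := ∑ u, m v u

/-- Combinatorial content of the paper's Claim 2.4: if `A` is bounded by the
sum of an acyclic multigraph `F̄` and a multigraph `F'` with all in- and
out-degrees at most 1, `A` is balanced at every vertex of positive degree,
and at least two distinct vertices have positive degree in `A`, then two
distinct vertices have in-degree exactly 1 in `A`. -/
theorem two_indegree_one_vertices {V : Type*} [Fintype V] [DecidableEq V]
    (Fbar F' A : V → V → ℕ)
    (hacyc : ¬ HasPosCycle Fbar)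
    (hF'in : ∀ v, inDeg F' v ≤ 1) (hF'out : ∀ v, outDeg F' v ≤ 1)
    (hA : ∀ u w, A u w ≤ Fbar u w + F' u w)
    (hbal : ∀ v, 0 < inDeg A v + outDeg A v → inDeg A v = outDeg A v)
    (htwo : ∃ v w : V, v ≠ w ∧ 0 < inDeg A v + outDeg A v ∧
      0 < inDeg A w + outDeg A w) :
    ∃ x y : V, x ≠ y ∧ inDeg A x = 1 ∧ inDeg A y = 1 := by
  classical
  set R : V → V → Prop := fun a b => 1 ≤ Fbar a b with hRdef
  -- irreflexivity of the transitive closure of `R`, from acyclicity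
  have hirr : ∀ v, ¬ Relation.TransGen R v v := by
    intro v hv
    obtain ⟨c, hvc, hcv⟩ := Relation.TransGen.head'_iff.mp hv
    obtain ⟨l, hl, hlast⟩ := List.exists_isChain_cons_of_relationReflTransGen hcv
    have hne : (c :: l) ≠ [] := by simp
    have hdec : (c :: l).dropLast ++ [v] = c :: l := by
      conv_lhs => rw [← hlast]
      exact List.dropLast_append_getLast hne
    refine hacyc ⟨v, (c :: l).dropLast, ?_⟩
    show List.Chain R v ((c :: l).dropLast ++ [v])
    rw [hdec]
    exact List.chain_cons.mpr ⟨hvc, hl⟩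
  have htrans : Transitive (Relation.TransGen R) := fun _ _ _ h h' => h.trans h'
  have hTwf : WellFounded (Relation.TransGen R) :=
    @Finite.wellFounded_of_trans_of_irrefl V _ _ ⟨fun _ _ _ h h' => htrans h h'⟩ ⟨hirr⟩
  have hwfR : WellFounded R :=
    Subrelation.wf (fun h => Relation.TransGen.single h) hTwf
  have hTwf' : WellFounded (Function.swap (Relation.TransGen R)) :=
    @Finite.wellFounded_of_trans_of_irrefl V _ _
      ⟨fun _ _ _ h h' => htrans h' h⟩ ⟨hirr⟩
  have hwfR' : WellFounded (Function.swap R) :=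
    Subrelation.wf (r := Function.swap (Relation.TransGen R))
      (fun h => Relation.TransGen.single h) hTwf'
  -- basic degree facts
  have outpos : ∀ u v, 1 ≤ A u v → 1 ≤ outDeg A u := fun u v h =>
    le_trans h (Finset.single_le_sum (f := fun w => A u w) (fun _ _ => Nat.zero_le _)
      (mem_univ v))
  have inpos : ∀ u v, 1 ≤ A u v → 1 ≤ inDeg A v := fun u v h =>
    le_trans h (Finset.single_le_sum (f := fun w => A w v) (fun _ _ => Nat.zero_le _)
      (mem_univ u))
  have balpos : ∀ v, 0 < inDeg A v + outDeg A v →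
      1 ≤ inDeg A v ∧ inDeg A v = outDeg A v := by
    intro v hv
    have heq := hbal v hv
    constructor
    · omega
    · exact heq
  -- one step backwards from an in-degree ≥ 2 vertex
  have step_back : ∀ v, 2 ≤ inDeg A v → ∃ u, R u v ∧ 1 ≤ A u v := by
    intro v hv
    by_contra hcon
    push_neg at hcon
    have hle : ∀ u, A u v ≤ F' u v := by
      intro u
      rcases Nat.eq_zero_or_pos (A u v) with h0 | h1
      · simp [h0]
      · have hF0 : Fbar u v = 0 := by
          by_contra hne
          have h2 := hcon u (Nat.pos_of_ne_zero hne)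
          omega
        have := hA u v
        omega
    have : inDeg A v ≤ inDeg F' v := Finset.sum_le_sum fun u _ => hle u
    have := hF'in v
    omega
  have step_fwd : ∀ v, 2 ≤ outDeg A v → ∃ w, R v w ∧ 1 ≤ A v w := by
    intro v hv
    by_contra hcon
    push_neg at hcon
    have hle : ∀ w, A v w ≤ F' v w := by
      intro w
      rcases Nat.eq_zero_or_pos (A v w) with h0 | h1
      · simp [h0]
      · have hF0 : Fbar v w = 0 := by
          by_contra hne
          have h2 := hcon w (Nat.pos_of_ne_zero hne)
          omega
        have := hA v w
        omega
    have : outDeg A v ≤ outDeg F' v := Finset.sum_le_sum fun w _ => hle w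
    have := hF'out v
    omega
  -- walking backwards reaches a vertex of in-degree 1
  have claimA : ∀ v, 0 < inDeg A v + outDeg A v →
      ∃ x, inDeg A x = 1 ∧ (x = v ∨ Relation.TransGen R x v) := by
    intro v
    induction v using hwfR.induction with
    | _ v IH =>
      intro hv
      obtain ⟨h1, heq⟩ := balpos v hv
      rcases eq_or_lt_of_le h1 with h | h
      · exact ⟨v, h.symm, Or.inl rfl⟩
      · obtain ⟨u, hRu, hAu⟩ := step_back v h
        have hu : 0 < inDeg A u + outDeg A u := by
          have := outpos u v hAu; omega
        obtain ⟨x, hx1, hx2⟩ := IH u hRu hu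
        refine ⟨x, hx1, Or.inr ?_⟩
        rcases hx2 with rfl | hT
        · exact Relation.TransGen.single hRu
        · exact hT.tail hRu
  -- walking forwards reaches a vertex of in-degree 1
  have claimB : ∀ v, 0 < inDeg A v + outDeg A v →
      ∃ y, inDeg A y = 1 ∧ (y = v ∨ Relation.TransGen R v y) := by
    intro v
    induction v using hwfR'.induction with
    | _ v IH =>
      intro hv
      obtain ⟨h1, heq⟩ := balpos v hv
      rcases eq_or_lt_of_le h1 with h | h
      · exact ⟨v, h.symm, Or.inl rfl⟩
      · have h2 : 2 ≤ outDeg A v := by omega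
        obtain ⟨w, hRw, hAw⟩ := step_fwd v h2
        have hw : 0 < inDeg A w + outDeg A w := by
          have := inpos v w hAw; omega
        obtain ⟨y, hy1, hy2⟩ := IH w hRw hw
        refine ⟨y, hy1, Or.inr ?_⟩
        rcases hy2 with rfl | hT
        · exact Relation.TransGen.single hRw
        · exact Relation.TransGen.head hRw hT
  -- conclude
  by_contra hcon
  push_neg at hcon
  have huniq : ∀ x y, inDeg A x = 1 → inDeg A y = 1 → x = y := by
    intro x y hx hy
    by_contra hne
    exact hcon x y hne hx hy
  obtain ⟨v, w, hvw, hv, hw⟩ := htwo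
  obtain ⟨x1, hx1, hr1⟩ := claimA v hv
  obtain ⟨y1, hy1, hr2⟩ := claimB v hv
  obtain ⟨x2, hx2, hr3⟩ := claimA w hw
  obtain ⟨y2, hy2, hr4⟩ := claimB w hw
  have e1 : y1 = x1 := huniq y1 x1 hy1 hx1
  have e2 : x2 = x1 := huniq x2 x1 hx2 hx1
  have e3 : y2 = x1 := huniq y2 x1 hy2 hx1
  rw [e1] at hr2
  rw [e2] at hr3
  rw [e3] at hr4
  have hxv : x1 = v := by
    rcases hr1 with h | hT1
    · exact h
    · rcases hr2 with h | hT2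
      · exact h
      · exact absurd (hT1.trans hT2) (hirr x1)
  have hxw : x1 = w := by
    rcases hr3 with h | hT1
    · exact h
    · rcases hr4 with h | hT2
      · exact h
      · exact absurd (hT1.trans hT2) (hirr x1)
  exact hvw (hxv ▸ hxw ▸ rfl)
end

section
/- Let W be a finite vertex set with s, t ∈ W, let m ≥ 1 be an integer, and let F : W × W → ℕ be the edge-multiplicity function of an acyclic directed multigraph that is the (edge-multiplicity) sum of m directed paths from s to t, such that every vertex of W lies on strictly more than m/2 of these paths. Then for any enumeration w_1, w_2, …, w_r of W that is a topological order of F (i.e., F(w_i, w_j) ≥ 1 implies i < j), we have F(w_i, w_{i+1}) ≥ 1 for every 1 ≤ i < r; that is, consecutive vertices in the topological order are joined by an edge of F. (The key claim in the proof of the paper's Theorem 1.) -/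
open Finset

/-!
Two vertices that each lie on more than half of the `m` paths lie on a common path `P`.
The position in the topological order strictly increases along `P`, so if `w` comes right after
`u` in that order, `w` must come right after `u` on `P` as well; that step of `P` is an edge of `F`.
-/

namespace List

variable {α : Type*}

lemma isChain_one_le_pathEdges [DecidableEq α] (p : List α) :
    p.IsChain (fun a b => 1 ≤ pathEdges p a b) := by
  refine isChain_iff_getElem.mpr fun k hk => List.count_pos_iff.mpr ?_
  refine mem_iff_getElem.mpr ⟨k, by simp; omega, ?_⟩
  rw [getElem_zip, getElem_tail]

lemma exists_consecutive_of_rank_eq_add_one (f : α → ℕ) {p : List α}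
    (hp : p.IsChain (fun a b => f a < f b)) {u w : α} (hu : u ∈ p) (hw : w ∈ p)
    (huw : f w = f u + 1) : ∃ (k : ℕ) (hk : k + 1 < p.length), p[k] = u ∧ p[k + 1] = w := by
  have hsorted : ∀ (i j : ℕ) (hij : i < j) (hj : j < p.length), f p[i] < f p[j] := by
    have := ((isChain_map f).mpr hp).pairwise
    intro i j hij hj
    have h := pairwise_iff_getElem.mp this i j (by simpa using hij.trans hj) (by simpa using hj) hij
    simpa only [getElem_map] using h
  obtain ⟨i, hi, rfl⟩ := mem_iff_getElem.mp hu
  obtain ⟨j, hj, rfl⟩ := mem_iff_getElem.mp hw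
  have hij : i < j := by
    by_contra! hji
    rcases hji.lt_or_eq with hlt | rfl
    · have := hsorted j i hlt hi; omega
    · omega
  have hj' : j = i + 1 := by
    by_contra hne
    have h1 := hsorted i (i + 1) (by omega) (by omega)
    have h2 := hsorted (i + 1) j (by omega) hj
    omega
  subst hj'
  exact ⟨i, hj, rfl, rfl⟩

end List

namespace Finset

lemma inter_nonempty_of_half_card_lt {ι : Type*} [Fintype ι] [DecidableEq ι] {A B : Finset ι}
    (hA : (Fintype.card ι : ℝ) / 2 < #A) (hB : (Fintype.card ι : ℝ) / 2 < #B) :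
    (A ∩ B).Nonempty := by
  refine inter_nonempty_of_card_lt_card_add_card (subset_univ A) (subset_univ B) ?_
  rw [card_univ]
  exact_mod_cast (by linarith : (Fintype.card ι : ℝ) < #A + #B)

end Finset

lemma one_le_of_one_le_pathEdges {ι V : Type*} [Fintype ι] [DecidableEq V]
    {D : ι → List V} {F : V → V → ℕ} (hdecomp : ∀ a b, ∑ i, pathEdges (D i) a b = F a b)
    (j : ι) {a b : V} (h : 1 ≤ pathEdges (D j) a b) : 1 ≤ F a b :=
  hdecomp a b ▸ h.trans (single_le_sum (f := fun i => pathEdges (D i) a b) (by simp) (mem_univ j))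

lemma idxOf_lt_idxOf_of_topological {V : Type*} [DecidableEq V] {F : V → V → ℕ} {e : List V}
    (hall : ∀ v, v ∈ e)
    (htopo : ∀ i j : Fin e.length, 1 ≤ F (e.get i) (e.get j) → (i : ℕ) < j) {a b : V}
    (hab : 1 ≤ F a b) : e.idxOf a < e.idxOf b := by
  have ha := List.idxOf_lt_length_iff.2 (hall a)
  have hb := List.idxOf_lt_length_iff.2 (hall b)
  exact htopo ⟨_, ha⟩ ⟨_, hb⟩ (by simpa [List.getElem_idxOf])

theorem topological_consecutive_edges {W : Type*} [DecidableEq W]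
    (m : ℕ)
    (F : W → W → ℕ)
    (D : Fin m → List W)
    (hdecomp : ∀ a b, ∑ i, pathEdges (D i) a b = F a b)
    (hcover : ∀ v : W,
      (m : ℝ) / 2 < (({i | v ∈ D i} : Finset (Fin m)).card : ℝ))
    (e : List W) (hnodup : e.Nodup) (hall : ∀ v : W, v ∈ e)
    (htopo : ∀ i j : Fin e.length, 1 ≤ F (e.get i) (e.get j) → (i : ℕ) < j) :
    ∀ i : ℕ, ∀ h : i + 1 < e.length,
      1 ≤ F (e.get ⟨i, by omega⟩) (e.get ⟨i + 1, h⟩) := by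
  intro i hi
  set u := e.get ⟨i, by omega⟩
  set w := e.get ⟨i + 1, hi⟩
  have hrank : e.idxOf w = e.idxOf u + 1 := by
    simp only [u, w, List.get_eq_getElem, hnodup.idxOf_getElem]
  obtain ⟨j, hj⟩ : (({j | u ∈ D j} : Finset (Fin m)) ∩ ({j | w ∈ D j} : Finset (Fin m))).Nonempty :=
    inter_nonempty_of_half_card_lt (by simpa using hcover u) (by simpa using hcover w)
  simp only [mem_inter, mem_filter_univ] at hj
  have hchain : (D j).IsChain (fun a b => e.idxOf a < e.idxOf b) :=
    (D j).isChain_one_le_pathEdges.imp fun a b h =>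
      idxOf_lt_idxOf_of_topological hall htopo (one_le_of_one_le_pathEdges hdecomp j h)
  obtain ⟨k, hk, hku, hkw⟩ :=
    List.exists_consecutive_of_rank_eq_add_one _ hchain hj.1 hj.2 hrank
  have hedge := (D j).isChain_one_le_pathEdges.getElem k hk
  rw [hku, hkw] at hedge
  exact one_le_of_one_le_pathEdges hdecomp j hedge
end
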